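/- arXiv:2206.05805 — 2 statements merged into one kernel-verified Lean document; each statement's English description precedes it below -/
import Mathlib

section
/- For every integer r with 2 ≤ r ≤ 15, there exists a linear code over GF(4) of length r+4, dimension r+1, and minimum distance 3 that has locality r. Since (r+4) − (r+1) − ⌈(r+1)/r⌉ + 2 = 3, such a code is an optimal (r+4, r+1, r) LRC meeting the Singleton-like bound. -/
noncomputable def wt {F : Type*} [Zero F] {ι : Type*} (x : ι → F) : ℕ :=
  {i | x i ≠ 0}.ncard

def dualCode {F : Type*} [Field F] {n : ℕ} (C : Submodule F (Fin n → F)) :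
    Submodule F (Fin n → F) where
  carrier := {y | ∀ x ∈ C, ∑ i, x i * y i = 0}
  add_mem' := by
    intro a b ha hb
    simp only [Set.mem_setOf_eq] at *
    intro z hz
    simp [Pi.add_apply, mul_add, Finset.sum_add_distrib, ha z hz, hb z hz]
  zero_mem' := by
    intro z hz
    simp
  smul_mem' := by
    intro c a ha
    simp only [Set.mem_setOf_eq] at *
    intro z hz
    have h : ∀ i, z i * (c • a) i = c * (z i * a i) := by
      intro i; simp [smul_eq_mul]; ring
    simp only [h, ← Finset.mul_sum, ha z hz, mul_zero]

def isMinDist {F : Type*} [Field F] {ι : Type*} (C : Submodule F (ι → F)) (d : ℕ) : Prop :=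
  (∃ x ∈ C, x ≠ 0 ∧ wt x = d) ∧ ∀ x ∈ C, x ≠ 0 → d ≤ wt x

def hasLocality {F : Type*} [Field F] {n : ℕ} (C : Submodule F (Fin n → F)) (r : ℕ) : Prop :=
  ∀ i : Fin n, ∃ h ∈ dualCode C, h i ≠ 0 ∧ wt h ≤ r + 1

abbrev GF4 := GaloisField 2 2

def ceilDiv (a b : ℕ) : ℕ := (a + b - 1) / b


theorem two_zero' : (2:GF4) = 0 := by exact_mod_cast CharP.cast_eq_zero GF4 2

theorem exists_omega' : ∃ ω : GF4, ω^2 + ω + 1 = 0 := by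
  haveI : Fintype GF4 := Fintype.ofFinite _
  haveI : DecidableEq GF4 := Classical.decEq _
  have hcard4 : Fintype.card GF4 = 4 := by
    have := GaloisField.card 2 2 (by norm_num)
    rwa [Nat.card_eq_fintype_card] at this
  obtain ⟨g, hg⟩ := IsCyclic.exists_generator (α := GF4ˣ)
  have hcard : Fintype.card GF4ˣ = 3 := by rw [Fintype.card_units, hcard4]
  have hord : orderOf g = 3 := by
    rw [orderOf_eq_card_of_forall_mem_zpowers hg, Nat.card_eq_fintype_card, hcard]
  refine ⟨(g : GF4), ?_⟩
  have h3 : (g:GF4)^3 = 1 := by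
    have h := pow_orderOf_eq_one g
    rw [hord] at h
    simpa using congrArg (Units.val) h
  have hne : (g:GF4) ≠ 1 := by
    intro h
    have : g = 1 := Units.ext h
    rw [this] at hord; simp at hord
  have hfac : ((g:GF4) - 1) * ((g:GF4)^2 + (g:GF4) + 1) = 0 := by
    linear_combination h3
  rcases mul_eq_zero.mp hfac with h | h
  · exact absurd (by linear_combination h : (g:GF4) = 1) hne
  · exact h

noncomputable def ggF (ω : GF4) : Fin 4 → GF4 := ![0, 1, ω, ω + 1]

def rowIdx : Fin 19 → Fin 4 := ![0,0,0,1,1,1,0,1,2,2,2,2,3,3,3,3,1,2,3]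
def colIdx : Fin 19 → Fin 4 := ![0,1,2,0,1,2,3,3,0,1,2,3,0,1,2,3,1,1,1]

noncomputable def Zc : Fin 19 → GF4 := fun j => if (j:ℕ) < 16 then 1 else 0

noncomputable def Pt (ω : GF4) (j : Fin 19) : Fin 3 → GF4 :=
  ![ggF ω (colIdx j), ggF ω (rowIdx j), Zc j]

lemma PtX (ω : GF4) (j : Fin 19) : Pt ω j 0 = ggF ω (colIdx j) := rfl
lemma PtY (ω : GF4) (j : Fin 19) : Pt ω j 1 = ggF ω (rowIdx j) := rfl
lemma PtZ (ω : GF4) (j : Fin 19) : Pt ω j 2 = Zc j := rfl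

lemma idx_inj : ∀ a b : Fin 19, ((a:ℕ) < 16 ↔ (b:ℕ) < 16) →
    rowIdx a = rowIdx b → colIdx a = colIdx b → a = b := by decide
lemma inf_col : ∀ j : Fin 19, ¬((j:ℕ) < 16) → colIdx j = 1 := by decide
lemma inf_row_ne : ∀ j : Fin 19, ¬((j:ℕ) < 16) → rowIdx j ≠ 0 := by decide
lemma row_zero_lt : ∀ j : Fin 19, rowIdx j = 0 → (j:ℕ) < 16 := by decide

section om
variable {ω : GF4} (hω : ω^2 + ω + 1 = 0)

include hω

lemma gg_inj : Function.Injective (ggF ω) := by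
  have h0 : ω ≠ 0 := by rintro rfl; simp at hω
  have h1 : ω ≠ 1 := by
    rintro rfl
    exact one_ne_zero (α := GF4) (by linear_combination hω - two_zero')
  have h2 : ω + 1 ≠ 0 := fun h => h1 (by linear_combination h - two_zero')
  have h3 : ω + 1 ≠ 1 := fun h => h0 (by linear_combination h)
  have h4 : ω + 1 ≠ ω := fun h => one_ne_zero (by linear_combination h)
  intro i j hij
  fin_cases i <;> fin_cases j <;> simp [ggF] at hij <;>
    first
      | rfl
      | (exact absurd hij (by tauto))

lemma gg_zero : ggF ω (0 : Fin 4) = 0 := rfl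
lemma gg_one : ggF ω (1 : Fin 4) = 1 := rfl

lemma gg_eq_zero_iff (i : Fin 4) : ggF ω i = 0 ↔ i = 0 := by
  constructor
  · intro h; exact gg_inj hω (h.trans (gg_zero hω).symm)
  · rintro rfl; rfl

lemma gg_sub_ne (i j : Fin 4) (h : i ≠ j) : ggF ω i - ggF ω j ≠ 0 := by
  intro hh
  exact h (gg_inj hω (by linear_combination hh))

/-- pairwise independence of columns -/
lemma indep {a b : Fin 19} (hab : a ≠ b) {u v : GF4}
    (h : ∀ m, u * Pt ω a m + v * Pt ω b m = 0) : u = 0 ∧ v = 0 := by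
  have h0 := h 0; have h1 := h 1; have h2 := h 2
  rw [PtX, PtX] at h0
  rw [PtY, PtY] at h1
  rw [PtZ, PtZ] at h2
  by_cases ha : (a:ℕ) < 16 <;> by_cases hb : (b:ℕ) < 16
  · -- both affine
    simp only [Zc, ha, hb, if_pos, mul_one] at h2
    have hv : v = -u := by linear_combination h2
    subst hv
    have hrc : rowIdx a ≠ rowIdx b ∨ colIdx a ≠ colIdx b := by
      by_contra hc; push_neg at hc
      exact hab (idx_inj a b (iff_of_true ha hb) hc.1 hc.2)
    have hu : u = 0 := by
      rcases hrc with hrow | hcol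
      · have : u * (ggF ω (rowIdx a) - ggF ω (rowIdx b)) = 0 := by linear_combination h1
        rcases mul_eq_zero.mp this with h | h
        · exact h
        · exact absurd h (gg_sub_ne hω _ _ hrow)
      · have : u * (ggF ω (colIdx a) - ggF ω (colIdx b)) = 0 := by linear_combination h0
        rcases mul_eq_zero.mp this with h | h
        · exact h
        · exact absurd h (gg_sub_ne hω _ _ hcol)
    exact ⟨hu, by rw [hu, neg_zero]⟩
  · -- a affine, b infinite
    simp only [Zc, ha, hb, if_pos, if_neg, not_false_iff, mul_one, mul_zero, add_zero] at h2
    refine ⟨h2, ?_⟩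
    rw [h2, zero_mul, zero_add, inf_col b hb, gg_one hω, mul_one] at h0
    exact h0
  · -- a infinite, b affine
    simp only [Zc, ha, hb, if_pos, if_neg, not_false_iff, mul_one, mul_zero, zero_add] at h2
    refine ⟨?_, h2⟩
    rw [h2, zero_mul, add_zero, inf_col a ha, gg_one hω, mul_one] at h0
    exact h0
  · -- both infinite
    rw [inf_col a ha, inf_col b hb, gg_one hω, mul_one, mul_one] at h0
    have hv : v = -u := by linear_combination h0
    subst hv
    have hrow : rowIdx a ≠ rowIdx b := by
      intro hc
      exact hab (idx_inj a b (iff_of_false ha hb) hc ((inf_col a ha).trans (inf_col b hb).symm))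
    have : u * (ggF ω (rowIdx a) - ggF ω (rowIdx b)) = 0 := by linear_combination h1
    rcases mul_eq_zero.mp this with h | h
    · exact ⟨h, by rw [h, neg_zero]⟩
    · exact absurd h (gg_sub_ne hω _ _ hrow)

end om

noncomputable def phiMap (ω : GF4) (n : ℕ) (h : n ≤ 19) :
    (Fin n → GF4) →ₗ[GF4] (Fin 3 → GF4) where
  toFun x := fun m => ∑ i, x i * Pt ω (Fin.castLE h i) m
  map_add' x y := by funext m; simp [add_mul, Finset.sum_add_distrib]
  map_smul' c x := by funext m; simp [Finset.mul_sum, mul_assoc]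

lemma phi_single (ω : GF4) (n : ℕ) (h : n ≤ 19) (a : Fin n) (c : GF4) :
    phiMap ω n h (Pi.single a c) = fun m => c * Pt ω (Fin.castLE h a) m := by
  funext m
  simp only [phiMap, LinearMap.coe_mk, AddHom.coe_mk]
  rw [Finset.sum_eq_single a]
  · simp
  · intro i _ hi; simp [Pi.single_eq_of_ne hi]
  · intro hne; exact absurd (Finset.mem_univ a) hne

lemma wt_le_of_three_zeros {n : ℕ} (v : Fin n → GF4) (a b c : Fin n)
    (hab : a ≠ b) (hac : a ≠ c) (hbc : b ≠ c)
    (ha : v a = 0) (hb : v b = 0) (hc : v c = 0) : wt v ≤ n - 3 := by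
  have hsub : {i | v i ≠ 0} ⊆ ({a, b, c} : Set (Fin n))ᶜ := by
    intro i hi
    simp only [Set.mem_compl_iff, Set.mem_insert_iff, Set.mem_singleton_iff]
    rintro (rfl | rfl | rfl) <;> exact hi (by assumption)
  have h3 : ({a, b, c} : Set (Fin n)).ncard = 3 := by
    rw [Set.ncard_insert_of_notMem (by simp [hab, hac]) (Set.toFinite _),
      Set.ncard_pair hbc]
  have hcompl : (({a, b, c} : Set (Fin n))ᶜ).ncard = n - 3 := by
    have := Set.ncard_add_ncard_compl ({a, b, c} : Set (Fin n)) (Set.toFinite _) (Set.toFinite _)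
    rw [h3, Nat.card_eq_fintype_card, Fintype.card_fin] at this
    omega
  calc wt v ≤ (({a, b, c} : Set (Fin n))ᶜ).ncard :=
        Set.ncard_le_ncard hsub (Set.toFinite _)
    _ = n - 3 := hcompl
/-- for 2 ≤ r ≤ 15 there exists an optimal quaternary
(r+4, r+1, r) LRC with minimum distance 3. -/
theorem stmt_15 (r : ℕ) (hr : 2 ≤ r) (hr' : r ≤ 15) :
    ∃ C : Submodule GF4 (Fin (r + 4) → GF4),
      Module.finrank GF4 C = r + 1 ∧ isMinDist C 3 ∧ hasLocality C r := by
  obtain ⟨ω, hω⟩ := exists_omega'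
  have h19 : r + 4 ≤ 19 := by omega
  set φ := phiMap ω (r + 4) h19 with hφ
  let i0 : Fin (r+4) := ⟨0, by omega⟩
  let i1 : Fin (r+4) := ⟨1, by omega⟩
  let i2 : Fin (r+4) := ⟨2, by omega⟩
  let i3 : Fin (r+4) := ⟨3, by omega⟩
  let i4 : Fin (r+4) := ⟨4, by omega⟩
  let i5 : Fin (r+4) := ⟨5, by omega⟩
  have ne01 : i0 ≠ i1 := by simp [i0, i1, Fin.ext_iff]
  have ne02 : i0 ≠ i2 := by simp [i0, i2, Fin.ext_iff]
  have ne12 : i1 ≠ i2 := by simp [i1, i2, Fin.ext_iff]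
  have ne34 : i3 ≠ i4 := by simp [i3, i4, Fin.ext_iff]
  have ne35 : i3 ≠ i5 := by simp [i3, i5, Fin.ext_iff]
  have ne45 : i4 ≠ i5 := by simp [i4, i5, Fin.ext_iff]
  have e0 : Pt ω (Fin.castLE h19 i0) = ![0, 0, 1] := by
    funext m; fin_cases m <;> rfl
  have e1 : Pt ω (Fin.castLE h19 i1) = ![1, 0, 1] := by
    funext m; fin_cases m <;> rfl
  have e2 : Pt ω (Fin.castLE h19 i2) = ![ω, 0, 1] := by
    funext m; fin_cases m <;> rfl
  have e3 : Pt ω (Fin.castLE h19 i3) = ![0, 1, 1] := by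
    funext m; fin_cases m <;> rfl
  have e4 : Pt ω (Fin.castLE h19 i4) = ![1, 1, 1] := by
    funext m; fin_cases m <;> rfl
  have e5 : Pt ω (Fin.castLE h19 i5) = ![ω, 1, 1] := by
    funext m; fin_cases m <;> rfl
  have hone : ω ≠ 0 := by rintro rfl; simp at hω
  have homega1 : ω + 1 ≠ 0 := by
    intro h
    have h1 : ω = 1 := by linear_combination h - two_zero'
    rw [h1] at hω
    exact one_ne_zero (α := GF4) (by linear_combination hω - two_zero')
  refine ⟨LinearMap.ker φ, ?_, ⟨?_, ?_⟩, ?_⟩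
  · -- finrank
    have hsurj : Function.Surjective φ := by
      intro y
      refine ⟨Pi.single i0 (y 0 + y 1 + y 2) + Pi.single i1 (y 0) + Pi.single i3 (y 1), ?_⟩
      rw [map_add, map_add, phi_single, phi_single, phi_single, e0, e1, e3]
      funext m
      fin_cases m <;> simp <;> linear_combination (y 0 + y 1) * two_zero'
    have hrank := LinearMap.finrank_range_add_finrank_ker φ
    rw [LinearMap.range_eq_top.mpr hsurj, finrank_top] at hrank
    have hp1 : Module.finrank GF4 (Fin 3 → GF4) = 3 := by
      simp [Module.finrank_pi]
    have hp2 : Module.finrank GF4 (Fin (r+4) → GF4) = r + 4 := by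
      simp [Module.finrank_pi]
    rw [hp1, hp2] at hrank
    omega
  · -- min dist witness
    refine ⟨Pi.single i0 (ω+1) + Pi.single i1 ω + Pi.single i2 1, ?_, ?_, ?_⟩
    · rw [LinearMap.mem_ker, map_add, map_add, phi_single, phi_single, phi_single,
        e0, e1, e2]
      funext m
      fin_cases m <;> simp <;>
        first
          | linear_combination ω * two_zero'
          | linear_combination (ω + 1) * two_zero'
    · intro h
      have := congrFun h i0
      simp [Pi.single_apply, ne01, ne02] at this
      exact homega1 this
    · unfold wt
      have hsupp : {i | (Pi.single i0 (ω+1) + Pi.single i1 ω + Pi.single i2 1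
            : Fin (r+4) → GF4) i ≠ 0}
          = ({i0, i1, i2} : Set (Fin (r+4))) := by
        ext i
        simp only [Set.mem_setOf_eq, Set.mem_insert_iff, Set.mem_singleton_iff]
        constructor
        · intro hi
          by_contra hc
          push_neg at hc
          exact hi (by simp [Pi.single_apply, hc.1, hc.2.1, hc.2.2])
        · rintro (rfl | rfl | rfl) <;>
            simp [Pi.single_apply, ne01, ne02, ne12, ne01.symm, ne02.symm, ne12.symm] <;>
            first | exact homega1 | exact hone
      rw [hsupp, Set.ncard_insert_of_notMem (by simp [ne01, ne02]) (Set.toFinite _),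
        Set.ncard_pair ne12]
  · -- min dist lower bound
    intro x hx hxne
    by_contra hlt
    push_neg at hlt
    have hwt : {i | x i ≠ 0}.ncard < 3 := hlt
    have hker : ∀ m, ∑ i', x i' * Pt ω (Fin.castLE h19 i') m = 0 :=
      fun m => congrFun (LinearMap.mem_ker.mp hx) m
    obtain ⟨a, ha⟩ : {i | x i ≠ 0}.Nonempty := by
      rcases Function.ne_iff.mp hxne with ⟨i, hi⟩
      exact ⟨i, by simpa using hi⟩
    by_cases hb : ∃ b ∈ {i | x i ≠ 0}, b ≠ a
    · obtain ⟨b, hbS, hba⟩ := hb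
      have hsub : {i | x i ≠ 0} ⊆ {a, b} := by
        intro c hc
        by_contra hcn
        simp only [Set.mem_insert_iff, Set.mem_singleton_iff, not_or] at hcn
        have h3 : ({a, b, c} : Set (Fin (r+4))).ncard = 3 := by
          rw [Set.ncard_insert_of_notMem (by simp [hba.symm, Ne.symm hcn.1])
            (Set.toFinite _), Set.ncard_pair (Ne.symm hcn.2)]
        have hsub2 : ({a, b, c} : Set (Fin (r+4))) ⊆ {i | x i ≠ 0} := by
          rintro d (rfl | rfl | rfl) <;> assumption
        have := Set.ncard_le_ncard hsub2 (Set.toFinite _)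
        omega
      have hsum : ∀ m, x a * Pt ω (Fin.castLE h19 a) m + x b * Pt ω (Fin.castLE h19 b) m = 0 := by
        intro m
        have heq := Finset.sum_subset (Finset.subset_univ ({a, b} : Finset (Fin (r+4))))
          (f := fun i' => x i' * Pt ω (Fin.castLE h19 i') m) ?_
        · rw [Finset.sum_pair hba.symm] at heq
          rw [heq, hker m]
        · intro i' _ hi'
          have hxi : x i' = 0 := by
            by_contra hne
            exact hi' (by have := hsub hne; simpa using this)
          simp [hxi]
      have hcast : Fin.castLE h19 a ≠ Fin.castLE h19 b :=
        fun hc => (Ne.symm hba) (Fin.castLE_injective h19 hc)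
      have := (indep hω hcast hsum).1
      exact ha this
    · push_neg at hb
      have hsum : ∀ m, x a * Pt ω (Fin.castLE h19 a) m = 0 := by
        intro m
        have heq := Finset.sum_eq_single (s := Finset.univ) a
          (f := fun i' => x i' * Pt ω (Fin.castLE h19 i') m) ?_ ?_
        · rw [← heq, hker m]
        · intro i' _ hi'
          have hxi : x i' = 0 := by
            by_contra hne
            exact hi' (hb i' hne)
          simp [hxi]
        · intro hne; exact absurd (Finset.mem_univ a) hne
      have hxa : x a = 0 := by
        by_cases haf : ((Fin.castLE h19 a : Fin 19) : ℕ) < 16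
        · have h2 := hsum 2
          rw [PtZ] at h2
          simp [Zc] at h2
          exact h2 (by simpa using haf)
        · have h1 := hsum 1
          rw [PtY] at h1
          rcases mul_eq_zero.mp h1 with h | h
          · exact h
          · exact absurd ((gg_eq_zero_iff hω _).mp h) (inf_row_ne _ haf)
      exact ha hxa
  · -- locality
    intro i
    by_cases hcase : rowIdx (Fin.castLE h19 i) = 0
    · refine ⟨fun i' => Pt ω (Fin.castLE h19 i') 1 + Pt ω (Fin.castLE h19 i') 2, ?_, ?_, ?_⟩
      · show ∀ x ∈ LinearMap.ker φ,
          ∑ i', x i' * (Pt ω (Fin.castLE h19 i') 1 + Pt ω (Fin.castLE h19 i') 2) = 0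
        intro x hx
        have h1 : ∑ i', x i' * Pt ω (Fin.castLE h19 i') 1 = 0 :=
          congrFun (LinearMap.mem_ker.mp hx) 1
        have h2 : ∑ i', x i' * Pt ω (Fin.castLE h19 i') 2 = 0 :=
          congrFun (LinearMap.mem_ker.mp hx) 2
        calc ∑ i', x i' * (Pt ω (Fin.castLE h19 i') 1 + Pt ω (Fin.castLE h19 i') 2)
            = (∑ i', x i' * Pt ω (Fin.castLE h19 i') 1)
              + ∑ i', x i' * Pt ω (Fin.castLE h19 i') 2 := by
              rw [← Finset.sum_add_distrib]
              exact Finset.sum_congr rfl (fun _ _ => mul_add _ _ _)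
          _ = 0 := by rw [h1, h2, add_zero]
      · show Pt ω (Fin.castLE h19 i) 1 + Pt ω (Fin.castLE h19 i) 2 ≠ 0
        rw [PtY, PtZ, hcase]
        have hz : Zc (Fin.castLE h19 i) = 1 := by
          have := row_zero_lt _ hcase
          simp only [Zc, if_pos this]
        rw [hz]
        show ggF ω 0 + 1 ≠ 0
        rw [gg_zero hω, zero_add]
        exact one_ne_zero
      · have hb := wt_le_of_three_zeros
          (fun i' => Pt ω (Fin.castLE h19 i') 1 + Pt ω (Fin.castLE h19 i') 2)
          i3 i4 i5 ne34 ne35 ne45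
          (by show Pt ω (Fin.castLE h19 i3) 1 + Pt ω (Fin.castLE h19 i3) 2 = 0
              rw [e3]; show (1:GF4) + 1 = 0; linear_combination two_zero')
          (by show Pt ω (Fin.castLE h19 i4) 1 + Pt ω (Fin.castLE h19 i4) 2 = 0
              rw [e4]; show (1:GF4) + 1 = 0; linear_combination two_zero')
          (by show Pt ω (Fin.castLE h19 i5) 1 + Pt ω (Fin.castLE h19 i5) 2 = 0
              rw [e5]; show (1:GF4) + 1 = 0; linear_combination two_zero')
        calc wt _ ≤ (r+4) - 3 := hb
          _ ≤ r + 1 := by omega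
    · refine ⟨fun i' => Pt ω (Fin.castLE h19 i') 1, ?_, ?_, ?_⟩
      · show ∀ x ∈ LinearMap.ker φ, ∑ i', x i' * Pt ω (Fin.castLE h19 i') 1 = 0
        intro x hx
        exact congrFun (LinearMap.mem_ker.mp hx) 1
      · show Pt ω (Fin.castLE h19 i) 1 ≠ 0
        rw [PtY]
        intro h
        exact hcase ((gg_eq_zero_iff hω _).mp h)
      · have hb := wt_le_of_three_zeros
          (fun i' => Pt ω (Fin.castLE h19 i') 1)
          i0 i1 i2 ne01 ne02 ne12
          (by show Pt ω (Fin.castLE h19 i0) 1 = 0; rw [e0]; rfl)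
          (by show Pt ω (Fin.castLE h19 i1) 1 = 0; rw [e1]; rfl)
          (by show Pt ω (Fin.castLE h19 i2) 1 = 0; rw [e2]; rfl)
        calc wt _ ≤ (r+4) - 3 := hb
          _ ≤ r + 1 := by omega
end

section
/- For every integer s ≥ 2, there exists a linear code over GF(4) of length 5s+5, dimension 4s+2, and minimum distance 4 that has locality 4. Since (5s+5) − (4s+2) − ⌈(4s+2)/4⌉ + 2 = 4, such a code is an optimal (5s+5, 4s+2, 4) LRC meeting the Singleton-like bound. -/
/-!
Split the `5(s+1)` coordinates into `s+1` blocks of five. The code is cut out by one parity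
check per block, which gives locality 4, and by two global checks applying the same `2 × 5`
matrix `localCheck ω` to every block. Each block of a codeword sums to zero, so it has weight
`0` or at least `2`; hence a nonzero codeword of weight `< 4` lives on a single block, where the
three checks become those of a `[5, 2, 4]` code over `GF(4)`. The `s + 3` checks are independent,
so the dimension is `5(s+1) - (s+3)`.
-/

open Finset

section Weight

variable {F : Type*} [Field F]

lemma wt_eq_card_filter {ι : Type*} [Fintype ι] [DecidableEq F] (x : ι → F) :
    wt x = #{i | x i ≠ 0} := by
  rw [wt, Set.ncard_eq_toFinset_card', Set.toFinset_ofPred]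

lemma wt_eq_zero_iff {ι : Type*} [Finite ι] {x : ι → F} : wt x = 0 ↔ x = 0 := by
  have := Fintype.ofFinite ι
  classical
  rw [wt_eq_card_filter, card_eq_zero, filter_eq_empty_iff, funext_iff]
  simp

lemma two_le_wt_of_sum_eq_zero {κ : Type*} [Fintype κ] {c : κ → F} (hc : c ≠ 0)
    (hsum : ∑ q, c q = 0) : 2 ≤ wt c := by
  classical
  have hne_zero : wt c ≠ 0 := mt wt_eq_zero_iff.mp hc
  have hne_one : wt c ≠ 1 := by
    rw [wt_eq_card_filter]
    intro h
    obtain ⟨q, hq⟩ := card_eq_one.mp h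
    have hcq : q ∈ ({i | c i ≠ 0} : Finset κ) := hq ▸ mem_singleton_self q
    rw [← sum_filter_ne_zero, hq, sum_singleton] at hsum
    exact (mem_filter.mp hcq).2 hsum
  omega

variable {J κ ι : Type*} [Fintype J] [Fintype κ]

lemma wt_eq_sum_wt_blocks (e : J × κ ≃ ι) (x : ι → F) :
    wt x = ∑ j, wt fun k => x (e (j, k)) := by
  classical
  let := Fintype.ofEquiv _ e
  simp only [wt_eq_card_filter, card_filter]
  rw [← Equiv.sum_comp e, Fintype.sum_prod_type]

end Weight

section LocalCode

variable {F : Type*} [Field F]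

/-- Together with an all-ones row, these columns form a parity-check matrix of a `[5, 2, 4]`
code as soon as `ω ^ 2 + ω + 1 = 0` in characteristic `2`. -/
def localCheck (ω : F) : Fin 5 → F × F :=
  ![(0, 0), (1, 0), (0, 1), (1, ω), (ω, 1)]

variable [CharP F 2] {ω : F}

lemma eq_zero_of_localCode_of_two_zeros (hω : ω ^ 2 + ω + 1 = 0) {c : Fin 5 → F}
    (hsum : ∑ q, c q = 0) (hcheck : ∑ q, c q • localCheck ω q = 0)
    {p q : Fin 5} (hpq : p ≠ q) (hp : c p = 0) (hq : c q = 0) : c = 0 := by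
  simp only [Fin.sum_univ_five, localCheck, Matrix.cons_val_zero, Matrix.cons_val_one,
    Matrix.cons_val, Prod.smul_mk, smul_eq_mul, mul_zero, mul_one, Prod.mk_add_mk, zero_add,
    add_zero, Prod.mk_eq_zero] at hsum hcheck
  obtain ⟨hcheck₁, hcheck₂⟩ := hcheck
  obtain ⟨h₃, h₄⟩ : c 3 = 0 ∧ c 4 = 0 := by
    fin_cases p <;> fin_cases q <;> simp_all <;> grind
  have h₁ : c 1 = 0 := by linear_combination hcheck₁ - h₃ - ω * h₄
  have h₂ : c 2 = 0 := by linear_combination hcheck₂ - ω * h₃ - h₄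
  have h₀ : c 0 = 0 := by linear_combination hsum - h₁ - h₂ - h₃ - h₄
  funext r
  fin_cases r <;> assumption

lemma four_le_wt_of_localCode (hω : ω ^ 2 + ω + 1 = 0) {c : Fin 5 → F} (hc : c ≠ 0)
    (hsum : ∑ q, c q = 0) (hcheck : ∑ q, c q • localCheck ω q = 0) : 4 ≤ wt c := by
  classical
  by_contra! hlt
  have hzeros : 1 < #{q | c q = 0} := by
    have := card_filter_add_card_filter_not (s := univ) (fun q => c q = 0)
    rw [wt_eq_card_filter] at hlt
    simp only [card_univ, Fintype.card_fin, ne_eq] at this hlt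
    omega
  obtain ⟨p, hp, q, hq, hpq⟩ := one_lt_card.mp hzeros
  simp only [mem_filter, mem_univ, true_and] at hp hq
  exact hc (eq_zero_of_localCode_of_two_zeros hω hsum hcheck hpq hp hq)

end LocalCode

section BlockCode

variable {F : Type*} [Field F] {J ι : Type*} {e : J × Fin 5 ≃ ι} {ω : F}

variable (e) in
def ofBlock [DecidableEq J] (j : J) (c : Fin 5 → F) : ι → F :=
  fun i => if (e.symm i).1 = j then c (e.symm i).2 else 0

@[simp]
lemma ofBlock_apply_equiv [DecidableEq J] (j j' : J) (c : Fin 5 → F) (q : Fin 5) :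
    ofBlock e j c (e (j', q)) = if j' = j then c q else 0 := by
  simp [ofBlock]

variable [Fintype J]

variable (e ω) in
def lrcCheck : (ι → F) →ₗ[F] (J → F) × (F × F) where
  toFun x := (fun j => ∑ q, x (e (j, q)), ∑ j, ∑ q, x (e (j, q)) • localCheck ω q)
  map_add' x y := by simp [add_smul, sum_add_distrib, Pi.add_def]
  map_smul' a x := by simp [smul_sum, smul_smul, mul_sum, Pi.smul_def]

variable (e ω) in
def lrcCode : Submodule F (ι → F) :=
  LinearMap.ker (lrcCheck e ω)

lemma mem_lrcCode {x : ι → F} :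
    x ∈ lrcCode e ω ↔
      (∀ j, ∑ q, x (e (j, q)) = 0) ∧ ∑ j, ∑ q, x (e (j, q)) • localCheck ω q = 0 := by
  simp [lrcCode, lrcCheck, Prod.ext_iff, funext_iff]

lemma lrcCheck_ofBlock [DecidableEq J] (j : J) (c : Fin 5 → F) :
    lrcCheck e ω (ofBlock e j c) = (Pi.single j (∑ q, c q), ∑ q, c q • localCheck ω q) := by
  ext j'
  · by_cases h : j' = j <;> simp [lrcCheck, h]
  · simp [lrcCheck]
  · simp [lrcCheck]

lemma wt_ofBlock [DecidableEq J] (j : J) (c : Fin 5 → F) : wt (ofBlock e j c) = wt c := by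
  rw [wt_eq_sum_wt_blocks e, sum_eq_single j]
  · simp
  · intro j' _ hj'
    simp only [ofBlock_apply_equiv, hj', if_false]
    exact wt_eq_zero_iff.mpr rfl
  · simp

lemma lrcCheck_surjective [Nonempty J] : Function.Surjective (lrcCheck e ω) := by
  classical
  obtain ⟨j₀⟩ := ‹Nonempty J›
  rintro ⟨y, u, v⟩
  refine ⟨∑ j, ofBlock e j (Pi.single 0 (y j)) + ofBlock e j₀ ![-(u + v), u, v, 0, 0], ?_⟩
  simp [lrcCheck_ofBlock, Fin.sum_univ_five, localCheck, Prod.ext_iff, Prod.fst_sum, Prod.snd_sum,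
    univ_sum_single]

lemma finrank_lrcCode [Nonempty J] : Module.finrank F (lrcCode e ω) = 4 * Fintype.card J - 2 := by
  let := Fintype.ofEquiv _ e
  have hrank := (lrcCheck e ω).finrank_range_add_finrank_ker
  rw [LinearMap.range_eq_top.mpr lrcCheck_surjective, finrank_top, Module.finrank_prod,
    Module.finrank_prod, Module.finrank_fintype_fun_eq_card, Module.finrank_fintype_fun_eq_card,
    Module.finrank_self, ← Fintype.card_congr e, Fintype.card_prod, Fintype.card_fin] at hrank
  have := Fintype.card_pos (α := J)
  change Module.finrank F (lrcCheck e ω).ker = _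
  omega

lemma four_le_wt_of_mem_lrcCode [CharP F 2] (hω : ω ^ 2 + ω + 1 = 0) {x : ι → F}
    (hx : x ∈ lrcCode e ω) (hx0 : x ≠ 0) : 4 ≤ wt x := by
  obtain ⟨hlocal, hglobal⟩ := mem_lrcCode.mp hx
  obtain ⟨j, hj⟩ : ∃ j, (fun q => x (e (j, q))) ≠ 0 := by
    by_contra! h
    exact hx0 (funext fun i => by simpa using congrFun (h (e.symm i).1) (e.symm i).2)
  rw [wt_eq_sum_wt_blocks e]
  by_cases hother : ∃ j', j' ≠ j ∧ (fun q => x (e (j', q))) ≠ 0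
  · obtain ⟨j', hj'j, hj'⟩ := hother
    calc 4 = 2 + 2 := rfl
      _ ≤ wt (fun q => x (e (j, q))) + wt (fun q => x (e (j', q))) :=
          add_le_add (two_le_wt_of_sum_eq_zero hj (hlocal j))
            (two_le_wt_of_sum_eq_zero hj' (hlocal j'))
      _ ≤ _ := add_le_sum (f := fun j => wt fun q => x (e (j, q))) (fun _ _ => Nat.zero_le _)
          (mem_univ _) (mem_univ _) hj'j.symm
  · push Not at hother
    have hcheck : ∑ q, x (e (j, q)) • localCheck ω q = 0 := by
      rwa [sum_eq_single j (fun j' _ hj' => by simp [congrFun (hother j' hj')]) (by simp)]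
        at hglobal
    exact (four_le_wt_of_localCode hω hj (hlocal j) hcheck).trans
      (single_le_sum (f := fun j => wt fun q => x (e (j, q))) (fun _ _ => Nat.zero_le _)
        (mem_univ j))

lemma isMinDist_lrcCode [CharP F 2] [Nonempty J] (hω : ω ^ 2 + ω + 1 = 0) :
    isMinDist (lrcCode e ω) 4 := by
  classical
  obtain ⟨j₀⟩ := ‹Nonempty J›
  have hω0 : ω ≠ 0 := by rintro rfl; norm_num at hω
  refine ⟨⟨ofBlock e j₀ ![ω, 1, ω, 1, 0], ?_, ?_, ?_⟩,
    fun x hx hx0 => four_le_wt_of_mem_lrcCode hω hx hx0⟩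
  · rw [lrcCode, LinearMap.mem_ker, lrcCheck_ofBlock]
    simp only [Fin.sum_univ_five, Matrix.cons_val_zero, Matrix.cons_val_one, Matrix.cons_val,
      add_zero, localCheck, Prod.smul_mk, smul_eq_mul, mul_zero, one_smul, Prod.mk_add_mk,
      zero_add, mul_one, zero_smul, Prod.mk_eq_zero, Pi.single_eq_zero_iff]
    exact ⟨by linear_combination (ω + 1) * CharTwo.two_eq_zero (R := F),
      CharTwo.add_self_eq_zero 1, CharTwo.add_self_eq_zero ω⟩
  · intro h
    simpa [hω0] using congrFun h (e (j₀, 0))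
  · rw [wt_ofBlock, wt_eq_card_filter, card_filter, Fin.sum_univ_five]
    simp [hω0]

lemma hasLocality_lrcCode {n : ℕ} (e : J × Fin 5 ≃ Fin n) (ω : F) :
    hasLocality (lrcCode e ω) 4 := by
  classical
  intro i
  refine ⟨ofBlock e (e.symm i).1 1, fun x hx => ?_, by simp [ofBlock], ?_⟩
  · rw [← Equiv.sum_comp e, Fintype.sum_prod_type,
      sum_eq_single (e.symm i).1 (fun j' _ hj' => by simp [hj']) (by simp)]
    simpa using (mem_lrcCode.mp hx).1 (e.symm i).1
  · rw [wt_ofBlock, wt_eq_card_filter]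
    simp

end BlockCode

lemma exists_sq_add_self_add_one_eq_zero {F : Type*} [Field F] [Finite F] (hF : Nat.card F = 4) :
    ∃ ω : F, ω ^ 2 + ω + 1 = 0 := by
  classical
  let := Fintype.ofFinite F
  rw [Nat.card_eq_fintype_card] at hF
  obtain ⟨ω, -, hω⟩ : ∃ ω ∈ univ, ω ∉ ({0, 1} : Finset F) := by
    refine exists_mem_notMem_of_card_lt_card ?_
    rw [card_univ, hF]
    exact (card_insert_le _ _).trans_lt (by simp)
  simp only [mem_insert, mem_singleton, not_or] at hω
  have hpow : ω ^ 4 = ω := hF ▸ FiniteField.pow_card ω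
  have hroots : ω * ((ω - 1) * (ω ^ 2 + ω + 1)) = 0 := by linear_combination hpow
  exact ⟨ω, (mul_eq_zero.mp ((mul_eq_zero.mp hroots).resolve_left hω.1)).resolve_left
    (sub_ne_zero.mpr hω.2)⟩

theorem stmt_17_general (s : ℕ) :
    ∃ C : Submodule GF4 (Fin (5 * s + 5) → GF4),
      Module.finrank GF4 C = 4 * s + 2 ∧ isMinDist C 4 ∧ hasLocality C 4 := by
  obtain ⟨ω, hω⟩ := exists_sq_add_self_add_one_eq_zero (GaloisField.card 2 2 two_ne_zero)
  let e : Fin (s + 1) × Fin 5 ≃ Fin (5 * s + 5) := Fintype.equivOfCardEq (by simp; ring)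
  refine ⟨lrcCode e ω, ?_, isMinDist_lrcCode hω, hasLocality_lrcCode e ω⟩
  rw [finrank_lrcCode, Fintype.card_fin]
  omega

/-- for s ≥ 2 there exists an optimal quaternary
(5s+5, 4s+2, 4) LRC with minimum distance 4. -/
theorem stmt_17 (s : ℕ) (hs : 2 ≤ s) :
    ∃ C : Submodule GF4 (Fin (5 * s + 5) → GF4),
      Module.finrank GF4 C = 4 * s + 2 ∧ isMinDist C 4 ∧ hasLocality C 4 :=
  stmt_17_general s
end
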